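/- For n > 2, if an optimal 2WCST for an instance of n keys is rooted at an equal-to test ⟨= i⟩, then i is a key of maximum weight, i.e., w_i ≥ w_k for all keys k. -/

import Mathlib

/-- Binary search trees with two-way comparisons (2WCST):
leaves are labelled by keys, internal nodes are equal-to tests `eqNode k yes no`
or less-than tests `ltNode k yes no` (yes-branch taken when `q = k`, resp. `q < k`). -/
inductive CTree where
  | leaf : ℕ → CTree
  | eqNode : ℕ → CTree → CTree → CTree
  | ltNode : ℕ → CTree → CTree → CTree
deriving DecidableEq

namespace CTree

/-- The key labelling the leaf reached by query `q`. -/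
def search : CTree → ℕ → ℕ
  | leaf k, _ => k
  | eqNode k y nb, q => if q = k then y.search q else nb.search q
  | ltNode k y nb, q => if q < k then y.search q else nb.search q

/-- The depth of the leaf reached by query `q`. -/
def searchDepth : CTree → ℕ → ℕ
  | leaf _, _ => 0
  | eqNode k y nb, q => (if q = k then y.searchDepth q else nb.searchDepth q) + 1
  | ltNode k y nb, q => (if q < k then y.searchDepth q else nb.searchDepth q) + 1

/-- All keys appearing in the tree (leaf labels and test keys). -/
def keys : CTree → Finset ℕ
  | leaf k => {k}
  | eqNode k y nb => insert k (y.keys ∪ nb.keys)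
  | ltNode k y nb => insert k (y.keys ∪ nb.keys)

/-- `T` is a valid 2WCST for the instance with key set `K = {1, …, n}`:
all keys used belong to `K` and every query `q ∈ K` reaches a leaf labelled `q`. -/
def ValidFor (n : ℕ) (T : CTree) : Prop :=
  T.keys ⊆ Finset.Icc 1 n ∧ ∀ q ∈ Finset.Icc 1 n, T.search q = q

/-- The cost of `T`: `∑_{k ∈ K} w_k · depth_T(k)`. -/
noncomputable def cost (w : ℕ → ℝ) (n : ℕ) (T : CTree) : ℝ :=
  ∑ k ∈ Finset.Icc 1 n, w k * T.searchDepth k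

/-- `T` is an optimal 2WCST for the instance. -/
noncomputable def OptimalFor (w : ℕ → ℝ) (n : ℕ) (T : CTree) : Prop :=
  ValidFor n T ∧ ∀ T' : CTree, ValidFor n T' → cost w n T ≤ cost w n T'

/-- `w(S)`: total weight of the keys labelling the leaves of a subtree. -/
noncomputable def wt (w : ℕ → ℝ) : CTree → ℝ
  | leaf k => w k
  | eqNode _ y nb => wt w y + wt w nb
  | ltNode _ y nb => wt w y + wt w nb

/-- The side-weight of a node. -/
noncomputable def sw (w : ℕ → ℝ) : CTree → ℝ
  | leaf _ => 0
  | eqNode k _ _ => w k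
  | ltNode _ y nb => min (wt w y) (wt w nb)

/-- `Occurs s T`: `s` occurs as a subtree (node) of `T`. -/
inductive Occurs : CTree → CTree → Prop
  | refl (t : CTree) : Occurs t t
  | eqYes {s k y nb} : Occurs s y → Occurs s (eqNode k y nb)
  | eqNo {s k y nb} : Occurs s nb → Occurs s (eqNode k y nb)
  | ltYes {s k y nb} : Occurs s y → Occurs s (ltNode k y nb)
  | ltNo {s k y nb} : Occurs s nb → Occurs s (ltNode k y nb)

/-- `v` is a child of node `u`. -/
def IsChildOf (v u : CTree) : Prop :=
  match u with
  | leaf _ => False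
  | eqNode _ y nb => v = y ∨ v = nb
  | ltNode _ y nb => v = y ∨ v = nb

/-- The root of the tree is an equal-to test. -/
def RootEq : CTree → Prop
  | eqNode _ _ _ => True
  | _ => False

/-- `ReplaceAt s t T T'`: `T'` is obtained from `T` by replacing one
occurrence of the subtree `s` by `t`, leaving the rest of `T` unchanged. -/
inductive ReplaceAt (s t : CTree) : CTree → CTree → Prop
  | here : ReplaceAt s t s t
  | eqYes {k y y' nb} : ReplaceAt s t y y' → ReplaceAt s t (eqNode k y nb) (eqNode k y' nb)
  | eqNo {k y nb nb'} : ReplaceAt s t nb nb' → ReplaceAt s t (eqNode k y nb) (eqNode k y nb')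
  | ltYes {k y y' nb} : ReplaceAt s t y y' → ReplaceAt s t (ltNode k y nb) (ltNode k y' nb)
  | ltNo {k y nb nb'} : ReplaceAt s t nb nb' → ReplaceAt s t (ltNode k y nb) (ltNode k y nb')

/-- Irreducibility relative to the set `Q` of queries that reach the current subtree:
every branch of every node is traversed by some query. -/
def IrredFrom : Finset ℕ → CTree → Prop
  | _, leaf _ => True
  | Q, eqNode k y nb =>
      (Q.filter (· = k)).Nonempty ∧ (Q.filter (· ≠ k)).Nonempty ∧
      IrredFrom (Q.filter (· = k)) y ∧ IrredFrom (Q.filter (· ≠ k)) nb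
  | Q, ltNode k y nb =>
      (Q.filter (· < k)).Nonempty ∧ (Q.filter (fun q => ¬ q < k)).Nonempty ∧
      IrredFrom (Q.filter (· < k)) y ∧ IrredFrom (Q.filter (fun q => ¬ q < k)) nb

/-- `T` is irreducible: no branch is redundant for the query set `{1, …, n}`. -/
def Irred (n : ℕ) (T : CTree) : Prop := IrredFrom (Finset.Icc 1 n) T

/-- The two kinds of comparison tests. -/
inductive TestKind where
  | eq : TestKind
  | lt : TestKind
deriving DecidableEq

/-- A test node `⟨? k⟩` on key `k` with `=/≥`-branch `hi` and `≠/<`-branch `lo`. -/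
def mkTest : TestKind → ℕ → CTree → CTree → CTree
  | .eq, k, hi, lo => eqNode k hi lo
  | .lt, k, hi, lo => ltNode k lo hi

/-- The `=/≥`-outcome of a test of kind `t` on key `b`, applied to query `q`. -/
def hiOutcome : TestKind → ℕ → ℕ → Prop
  | .eq, b, q => q = b
  | .lt, b, q => b ≤ q

instance (t : TestKind) (b q : ℕ) : Decidable (hiOutcome t b q) :=
  match t with
  | .eq => inferInstanceAs (Decidable (q = b))
  | .lt => inferInstanceAs (Decidable (b ≤ q))

/-- Number of leaves of a tree. -/
def numLeaves : CTree → ℕ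
  | leaf _ => 1
  | eqNode _ y nb => y.numLeaves + nb.numLeaves
  | ltNode _ y nb => y.numLeaves + nb.numLeaves

end CTree

/-!
Let `⟨= i⟩ (Y, N)` be optimal and `k ≠ i`; as `N` serves at least two queries, `k` has depth
`d ≥ 2`. Side weights decrease downwards in an optimal tree: two comparisons never cross, so one
grandchild of a node can be rotated above its parent, and optimality bounds the weight it carries
by the weight of the parent's other side. Walking down the search path of `k` from the root,
whose other side weighs `w i`, either some side containing `k` weighs at most `w i`, or every side
leaving the path does. In the second case, deleting `k` and re-inserting it as a leaf under a new
root test `⟨= k⟩` changes the cost by at most `(d - 1) (w i - w k)`, which optimality forces to be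
nonnegative.
-/

namespace CTree

open Finset

/-- A comparison test together with the outcome that counts as "yes"; the negated forms `ne` and
`ge` let every node be read with either child first. -/
inductive Comparison where
  | eq (j : ℕ)
  | ne (j : ℕ)
  | lt (m : ℕ)
  | ge (m : ℕ)

namespace Comparison

def Holds : Comparison → ℕ → Prop
  | eq j, q => q = j
  | ne j, q => q ≠ j
  | lt m, q => q < m
  | ge m, q => m ≤ q

instance : (c : Comparison) → DecidablePred c.Holds
  | eq j => fun q => inferInstanceAs (Decidable (q = j))
  | ne j => fun q => inferInstanceAs (Decidable (q ≠ j))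
  | lt m => fun q => inferInstanceAs (Decidable (q < m))
  | ge m => fun q => inferInstanceAs (Decidable (m ≤ q))

def neg : Comparison → Comparison
  | eq j => ne j
  | ne j => eq j
  | lt m => ge m
  | ge m => lt m

def key : Comparison → ℕ
  | eq j | ne j | lt j | ge j => j

def node : Comparison → CTree → CTree → CTree
  | eq j, A, B => eqNode j A B
  | ne j, A, B => eqNode j B A
  | lt m, A, B => ltNode m A B
  | ge m, A, B => ltNode m B A

variable (c c' : Comparison) (A B : CTree) (q : ℕ)

@[simp]
theorem holds_neg : c.neg.Holds q ↔ ¬ c.Holds q := by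
  cases c <;> simp [neg, Holds]

theorem neg_node : c.neg.node B A = c.node A B := by
  cases c <;> rfl

theorem search_node : (c.node A B).search q = if c.Holds q then A.search q else B.search q := by
  by_cases h : c.Holds q <;> simp only [h, if_true, if_false] <;> cases c <;>
    simp_all [node, search, Holds, not_lt.2]

theorem searchDepth_node :
    (c.node A B).searchDepth q = (if c.Holds q then A.searchDepth q else B.searchDepth q) + 1 := by
  by_cases h : c.Holds q <;> simp only [h, if_true, if_false] <;> cases c <;>
    simp_all [node, searchDepth, Holds, not_lt.2]

theorem keys_node : (c.node A B).keys = insert c.key (A.keys ∪ B.keys) := by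
  cases c <;> simp only [node, keys, key, union_comm]

/-- Two comparisons never cross: one cell of the partition of `ℕ` they induce is empty. -/
theorem noncrossing :
    (∀ q, c.Holds q → c'.Holds q) ∨ (∀ q, c.Holds q → ¬ c'.Holds q) ∨
      (∀ q, ¬ c.Holds q → c'.Holds q) ∨ (∀ q, ¬ c.Holds q → ¬ c'.Holds q) := by
  by_contra! h
  obtain ⟨⟨a, ha, ha'⟩, ⟨b, hb, hb'⟩, ⟨d, hd, hd'⟩, ⟨e, he, he'⟩⟩ := h
  cases c <;> cases c' <;> simp only [Holds] at * <;> omega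

end Comparison

@[elab_as_elim]
theorem node_induction {motive : CTree → Prop} (leaf : ∀ ℓ, motive (.leaf ℓ))
    (node : ∀ (c : Comparison) A B, motive A → motive B → motive (c.node A B)) :
    ∀ T, motive T
  | .leaf ℓ => leaf ℓ
  | eqNode j A B =>
    node (.eq j) A B (node_induction leaf node A) (node_induction leaf node B)
  | ltNode m A B =>
    node (.lt m) A B (node_induction leaf node A) (node_induction leaf node B)

open Comparison

def ValidOn (K Q : Finset ℕ) (T : CTree) : Prop :=
  T.keys ⊆ K ∧ ∀ q ∈ Q, T.search q = q

noncomputable def costOn (w : ℕ → ℝ) (Q : Finset ℕ) (T : CTree) : ℝ :=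
  ∑ q ∈ Q, w q * T.searchDepth q

def OptimalOn (w : ℕ → ℝ) (K Q : Finset ℕ) (T : CTree) : Prop :=
  ValidOn K Q T ∧ ∀ T', ValidOn K Q T' → costOn w Q T ≤ costOn w Q T'

variable {w : ℕ → ℝ} {K Q : Finset ℕ} {c c' : Comparison} {S A B T : CTree} {k : ℕ} {b : ℝ}

theorem ValidOn.mono {Q' : Finset ℕ} (hT : ValidOn K Q T) (h : Q' ⊆ Q) : ValidOn K Q' T :=
  ⟨hT.1, fun q hq => hT.2 q (h hq)⟩

theorem validOn_node :
    ValidOn K Q (c.node A B) ↔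
      c.key ∈ K ∧ ValidOn K {q ∈ Q | c.Holds q} A ∧ ValidOn K {q ∈ Q | ¬ c.Holds q} B := by
  simp only [ValidOn, keys_node, insert_subset_iff, union_subset_iff, search_node, mem_filter]
  constructor
  · rintro ⟨⟨hc, hA, hB⟩, h⟩
    exact ⟨hc, ⟨hA, fun q ⟨hq, hcq⟩ => by simpa [hcq] using h q hq⟩,
      ⟨hB, fun q ⟨hq, hcq⟩ => by simpa [hcq] using h q hq⟩⟩
  · rintro ⟨hc, ⟨hA, hAq⟩, ⟨hB, hBq⟩⟩
    refine ⟨⟨hc, hA, hB⟩, fun q hq => ?_⟩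
    split_ifs with hcq
    exacts [hAq q ⟨hq, hcq⟩, hBq q ⟨hq, hcq⟩]

theorem ValidOn.one_le_searchDepth {j : ℕ} (hT : ValidOn K Q T) (hk : k ∈ Q) (hj : j ∈ Q)
    (hjk : j ≠ k) : 1 ≤ T.searchDepth k := by
  induction T using node_induction with
  | leaf ℓ =>
    have := hT.2 k hk
    have := hT.2 j hj
    simp_all [search]
  | node => simp [searchDepth_node]

@[simp]
theorem costOn_leaf (ℓ : ℕ) : costOn w Q (leaf ℓ) = 0 := by
  simp [costOn, searchDepth]

theorem costOn_erase_add (hk : k ∈ Q) :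
    costOn w (Q.erase k) T + w k * T.searchDepth k = costOn w Q T :=
  sum_erase_add Q _ hk

theorem costOn_node :
    costOn w Q (c.node A B) =
      costOn w {q ∈ Q | c.Holds q} A + costOn w {q ∈ Q | ¬ c.Holds q} B + ∑ q ∈ Q, w q := by
  unfold costOn
  rw [← sum_filter_add_sum_filter_not Q c.Holds, ← sum_filter_add_sum_filter_not Q c.Holds w,
    add_add_add_comm, ← sum_add_distrib, ← sum_add_distrib]
  congr 1 <;> refine sum_congr rfl fun q hq => ?_ <;>
    simp [searchDepth_node, (mem_filter.1 hq).2, mul_add]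

theorem OptimalOn.node_right (hT : OptimalOn w K Q (c.node A B)) :
    OptimalOn w K {q ∈ Q | ¬ c.Holds q} B := by
  obtain ⟨hc, hA, hB⟩ := validOn_node.1 hT.1
  refine ⟨hB, fun B' hB' => ?_⟩
  have := hT.2 (c.node A B') (validOn_node.2 ⟨hc, hA, hB'⟩)
  rw [costOn_node, costOn_node] at this
  linarith

/-- Compare with the rotated tree `c'.node (c.node S A) B`, which is still correct because `c`
implies `c'`. -/
theorem OptimalOn.sum_le_of_imp (hT : OptimalOn w K Q (c.node S (c'.node A B)))
    (h : ∀ q, c.Holds q → c'.Holds q) :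
    ∑ q ∈ {q ∈ {q ∈ Q | ¬ c.Holds q} | ¬ c'.Holds q}, w q ≤ ∑ q ∈ {q ∈ Q | c.Holds q}, w q := by
  set Q₀ := {q ∈ Q | ¬ c.Holds q}
  obtain ⟨hc, hS, hC⟩ := validOn_node.1 hT.1
  obtain ⟨hc', hA, hB⟩ := validOn_node.1 hC
  have e₁ : {q ∈ {q ∈ Q | c'.Holds q} | c.Holds q} = {q ∈ Q | c.Holds q} := by
    ext q; have := h q; simp only [mem_filter]; tauto
  have e₂ : {q ∈ {q ∈ Q | c'.Holds q} | ¬ c.Holds q} = {q ∈ Q₀ | c'.Holds q} := by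
    ext q; simp only [Q₀, mem_filter]; tauto
  have e₃ : {q ∈ Q | ¬ c'.Holds q} = {q ∈ Q₀ | ¬ c'.Holds q} := by
    ext q; have := h q; simp only [Q₀, mem_filter]; tauto
  have hrot := hT.2 (c'.node (c.node S A) B)
    (validOn_node.2 ⟨hc', validOn_node.2 ⟨hc, e₁ ▸ hS, e₂ ▸ hA⟩, e₃ ▸ hB⟩)
  simp only [costOn_node, e₁, e₂, e₃] at hrot
  have hQ' := sum_filter_add_sum_filter_not {q ∈ Q | c'.Holds q} c.Holds w
  have hQ₀ := sum_filter_add_sum_filter_not Q₀ c'.Holds w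
  rw [e₁, e₂] at hQ'
  linarith

/-- Side weights decrease downwards in an optimal tree. -/
theorem OptimalOn.min_sum_le (hT : OptimalOn w K Q (c.node S (c'.node A B)))
    (hw : ∀ q ∈ Q, 0 ≤ w q) :
    min (∑ q ∈ {q ∈ {q ∈ Q | ¬ c.Holds q} | c'.Holds q}, w q)
        (∑ q ∈ {q ∈ {q ∈ Q | ¬ c.Holds q} | ¬ c'.Holds q}, w q) ≤
      ∑ q ∈ {q ∈ Q | c.Holds q}, w q := by
  have hS : 0 ≤ ∑ q ∈ {q ∈ Q | c.Holds q}, w q := sum_nonneg fun q hq => hw q (mem_filter.1 hq).1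
  rcases c.noncrossing c' with h | h | h | h
  · exact min_le_of_right_le (hT.sum_le_of_imp h)
  · rw [← neg_node c' A B] at hT
    exact min_le_of_left_le (by simpa using hT.sum_le_of_imp (by simpa using h))
  · refine min_le_of_right_le ?_
    rw [filter_false_of_mem fun q hq => not_not.2 (h q (mem_filter.1 hq).2), sum_empty]
    exact hS
  · refine min_le_of_left_le ?_
    rw [filter_false_of_mem fun q hq => h q (mem_filter.1 hq).2, sum_empty]
    exact hS

/-- Deleting the query `k` from `T` saves at least `∑_{Q ∖ k} w - (depth_T k - 1) b`. -/
def CheaplyErasable (w : ℕ → ℝ) (K Q : Finset ℕ) (k : ℕ) (b : ℝ) (T : CTree) : Prop :=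
  ∃ T', ValidOn K (Q.erase k) T' ∧
    costOn w (Q.erase k) T' + ∑ q ∈ Q.erase k, w q + b ≤
      costOn w (Q.erase k) T + T.searchDepth k * b

theorem ValidOn.cheaplyErasable_node_leaf {ℓ : ℕ} (hT : ValidOn K Q (c.node S (leaf ℓ)))
    (hk : k ∈ Q) (hck : ¬ c.Holds k) : CheaplyErasable w K Q k b (c.node S (leaf ℓ)) := by
  obtain ⟨-, hS, -, hℓ⟩ := validOn_node.1 hT
  have hc : ∀ q ∈ Q.erase k, c.Holds q := by
    intro q hq
    obtain ⟨hqk, hq⟩ := mem_erase.1 hq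
    by_contra hcq
    have h₁ := hℓ q (mem_filter.2 ⟨hq, hcq⟩)
    have h₂ := hℓ k (mem_filter.2 ⟨hk, hck⟩)
    simp only [search] at h₁ h₂
    exact hqk (h₁.symm.trans h₂)
  refine ⟨S, hS.mono fun q hq => mem_filter.2 ⟨mem_of_mem_erase hq, hc q hq⟩, ?_⟩
  rw [costOn_node, filter_true_of_mem hc, costOn_leaf, searchDepth_node, if_neg hck]
  simp [searchDepth]

theorem ValidOn.cheaplyErasable_node {C : CTree} (hT : ValidOn K Q (c.node S C))
    (hck : ¬ c.Holds k) (hS : ∑ q ∈ {q ∈ Q | c.Holds q}, w q ≤ b)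
    (hC : CheaplyErasable w K {q ∈ Q | ¬ c.Holds q} k b C) :
    CheaplyErasable w K Q k b (c.node S C) := by
  obtain ⟨C', hC', hcost⟩ := hC
  obtain ⟨hc, hS', -⟩ := validOn_node.1 hT
  have e₁ : {q ∈ Q.erase k | c.Holds q} = {q ∈ Q | c.Holds q} := by
    rw [filter_erase, erase_eq_of_notMem fun h => hck (mem_filter.1 h).2]
  have e₂ : {q ∈ Q.erase k | ¬ c.Holds q} = {q ∈ Q | ¬ c.Holds q}.erase k := filter_erase _ _ _
  refine ⟨c.node S C', validOn_node.2 ⟨hc, e₁ ▸ hS', e₂ ▸ hC'⟩, ?_⟩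
  have hsum := sum_filter_add_sum_filter_not (Q.erase k) c.Holds w
  rw [e₁, e₂] at hsum
  rw [costOn_node, costOn_node, e₁, e₂, searchDepth_node, if_neg hck]
  push_cast
  linarith

theorem OptimalOn.le_or_cheaplyErasable {C : CTree} (hT : OptimalOn w K Q (c.node S C))
    (hw : ∀ q ∈ Q, 0 ≤ w q) (hk : k ∈ Q) (hck : ¬ c.Holds k)
    (hS : ∑ q ∈ {q ∈ Q | c.Holds q}, w q ≤ b) :
    w k ≤ b ∨ CheaplyErasable w K Q k b (c.node S C) := by
  induction C using node_induction generalizing c S Q with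
  | leaf ℓ => exact .inr (hT.1.cheaplyErasable_node_leaf hk hck)
  | node c' A B ihA ihB =>
    refine Or.imp_right (hT.1.cheaplyErasable_node hck hS) ?_
    have hC := hT.node_right
    have hk₀ : k ∈ {q ∈ Q | ¬ c.Holds q} := mem_filter.2 ⟨hk, hck⟩
    have hw₀ : ∀ q ∈ {q ∈ Q | ¬ c.Holds q}, 0 ≤ w q := fun q hq => hw q (mem_filter.1 hq).1
    have light {P : ℕ → Prop} [DecidablePred P] (hkP : P k)
        (h : ∑ q ∈ {q ∈ {q ∈ Q | ¬ c.Holds q} | P q}, w q ≤ ∑ q ∈ {q ∈ Q | c.Holds q}, w q) :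
        w k ≤ b :=
      (single_le_sum (fun q hq => hw₀ q (mem_filter.1 hq).1) (mem_filter.2 ⟨hk₀, hkP⟩)).trans
        (h.trans hS)
    rcases min_le_iff.1 (hT.min_sum_le hw) with h | h <;> by_cases hk' : c'.Holds k
    · exact .inl (light hk' h)
    · exact ihB hC hw₀ hk₀ hk' (h.trans hS)
    · rw [← neg_node c' A B] at hC ⊢
      exact ihA hC hw₀ hk₀ (by simpa using hk') (by simpa using h.trans hS)
    · exact .inl (light hk' h)

/-- Compare with the tree that tests `⟨= k⟩` first and then runs a tree with `k` deleted. -/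
theorem OptimalOn.le_of_cheaplyErasable (hT : OptimalOn w K Q T) (hk : k ∈ Q) (hkK : k ∈ K)
    (hE : CheaplyErasable w K Q k b T) (hd : 2 ≤ T.searchDepth k) : w k ≤ b := by
  obtain ⟨T', hT', hcost⟩ := hE
  have hleaf : ValidOn K {q ∈ Q | (Comparison.eq k).Holds q} (leaf k) :=
    ⟨by simpa [keys], fun q hq => ((mem_filter.1 hq).2 : q = k).symm⟩
  have e : {q ∈ Q | ¬ (Comparison.eq k).Holds q} = Q.erase k := by
    ext q; rw [mem_filter, mem_erase]; exact and_comm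
  have h := hT.2 ((Comparison.eq k).node (leaf k) T') (validOn_node.2 ⟨hkK, hleaf, e ▸ hT'⟩)
  rw [costOn_node, costOn_leaf, e, ← costOn_erase_add hk, ← sum_erase_add Q w hk] at h
  have hd' : (2 : ℝ) ≤ T.searchDepth k := by exact_mod_cast hd
  nlinarith

end CTree

open CTree in
/-- For `n > 2`, if an optimal 2WCST for an instance of `n` keys is rooted at an
equal-to test `⟨= i⟩`, then `i` is a key of maximum weight. -/
theorem root_eq_test_is_max_weight
    (n : ℕ) (hn : 2 < n) (w : ℕ → ℝ) (hw : ∀ k ∈ Finset.Icc 1 n, 0 ≤ w k)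
    (i : ℕ) (Y N : CTree)
    (hopt : OptimalFor w n (CTree.eqNode i Y N)) :
    ∀ k ∈ Finset.Icc 1 n, w k ≤ w i := by
  intro k hk
  obtain rfl | hki := eq_or_ne k i
  · exact le_rfl
  have hT : OptimalOn w (Finset.Icc 1 n) (Finset.Icc 1 n) ((Comparison.eq i).node Y N) := hopt
  obtain ⟨(hi : i ∈ Finset.Icc 1 n), -, hN⟩ := validOn_node.1 hT.1
  obtain ⟨j, hj, hjk⟩ := Finset.exists_mem_ne (s := (Finset.Icc 1 n).erase i)
    (by rw [Finset.card_erase_of_mem hi, Nat.card_Icc]; omega) k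
  obtain ⟨hji, hj⟩ := Finset.mem_erase.1 hj
  have hd : 2 ≤ (eqNode i Y N).searchDepth k := by
    have := hN.one_le_searchDepth (Finset.mem_filter.2 ⟨hk, hki⟩) (Finset.mem_filter.2 ⟨hj, hji⟩) hjk
    simp only [searchDepth, if_neg hki]
    omega
  have hwi : ∑ q ∈ {q ∈ Finset.Icc 1 n | (Comparison.eq i).Holds q}, w q = w i := by
    rw [show {q ∈ Finset.Icc 1 n | (Comparison.eq i).Holds q} = {i} from
      Finset.filter_eq' _ i ▸ if_pos hi, Finset.sum_singleton]
  exact (hT.le_or_cheaplyErasable hw hk hki hwi.le).elim id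
    fun hE => hT.le_of_cheaplyErasable hk hk hE hd
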